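/- Let B ⊂ A be an inclusion of simple unital C*-algebras with a conditional expectation of index-finite type. Then the bilinear form ⟨x,w⟩_NV = dτ⁻² tr(x e_2 e_1 w), for x ∈ P and w ∈ Q, is a non-degenerate duality between P and Q: if ⟨x,w⟩_NV = 0 for all x ∈ P then w = 0, and if ⟨x,w⟩_NV = 0 for all w ∈ Q then x = 0. -/

import Mathlib

open scoped TensorProduct

noncomputable section

/-- A unital C*-algebra is *simple* if it has no nontrivial closed two-sided ideals. -/
def IsSimpleCStarAlgebra (A : Type*) [Ring A] [TopologicalSpace A] : Prop :=
  ∀ I : TwoSidedIdeal A, IsClosed (I : Set A) → I = ⊥ ∨ I = ⊤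

/-- A conditional expectation from the subalgebra `A` of the ambient algebra `C`
onto its subalgebra `B`, recorded as a linear map on `C`. -/
structure CondExpOn (C : Type*) [CStarAlgebra C] (A B : StarSubalgebra ℂ C) where
  map : C →ₗ[ℂ] C
  mem_of_mem : ∀ x ∈ A, map x ∈ B
  fixes : ∀ x ∈ B, map x = x
  bimodule : ∀ b ∈ B, ∀ b' ∈ B, ∀ x ∈ A, map (b * x * b') = b * map x * b'
  star_map : ∀ x ∈ A, map (star x) = star (map x)
  positive : ∀ x ∈ A, ∃ y ∈ B, map (star x * x) = star y * y

/-- A (Watatani) quasi-basis for an expectation-like map `E` on the set `S`: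
`∑ᵢ uᵢ E(uᵢ* y) = y = ∑ᵢ E(y uᵢ) uᵢ*` for all `y ∈ S`.  The existence of a quasi-basis
is the statement that the corresponding conditional expectation is of index-finite type. -/
structure IsQuasiBasisOn {C : Type*} [CStarAlgebra C] (E : C →ₗ[ℂ] C) (S : Set C)
    {n : ℕ} (u : Fin n → C) : Prop where
  mem : ∀ i, u i ∈ S
  left : ∀ y ∈ S, ∑ i, u i * E (star (u i) * y) = y
  right : ∀ y ∈ S, ∑ i, E (y * u i) * star (u i) = y

/-- The relative commutant `M' ∩ N` inside the ambient algebra `C`. -/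
def relativeCommutant {C : Type*} [CStarAlgebra C] (M N : StarSubalgebra ℂ C) :
    Submodule ℂ C where
  carrier := {x | x ∈ N ∧ ∀ m ∈ M, m * x = x * m}
  add_mem' := fun hx hy => ⟨add_mem hx.1 hy.1,
    fun m hm => by rw [mul_add, add_mul, hx.2 m hm, hy.2 m hm]⟩
  zero_mem' := ⟨zero_mem _, fun m _ => by rw [mul_zero, zero_mul]⟩
  smul_mem' := fun c x hx => ⟨SMulMemClass.smul_mem c hx.1,
    fun m hm => by rw [mul_smul_comm, smul_mul_assoc, hx.2 m hm]⟩

/-- The pairing of two linear functionals against a tensor: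
`pairT f g (a ⊗ b) = f a * g b`. -/
def pairT {C : Type*} [CStarAlgebra C] (f g : C →ₗ[ℂ] ℂ) : C ⊗[ℂ] C →ₗ[ℂ] ℂ :=
  (TensorProduct.lid ℂ ℂ).toLinearMap ∘ₗ TensorProduct.map f g

/-- `(ε ⊗ id)` applied to a tensor. -/
def counitL {C : Type*} [CStarAlgebra C] (ε : C →ₗ[ℂ] ℂ) : C ⊗[ℂ] C →ₗ[ℂ] C :=
  (TensorProduct.lid ℂ C).toLinearMap ∘ₗ TensorProduct.map ε LinearMap.id

/-- `(id ⊗ ε)` applied to a tensor. -/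
def counitR {C : Type*} [CStarAlgebra C] (ε : C →ₗ[ℂ] ℂ) : C ⊗[ℂ] C →ₗ[ℂ] C :=
  (TensorProduct.rid ℂ C).toLinearMap ∘ₗ TensorProduct.map LinearMap.id ε

/-- Sweedler expression `t ↦ ε(t₍₁₎ w) t₍₂₎`; applied to `Δ(1)` this is the
target counital map `ε^t(w) = ε(1₍₁₎ w) 1₍₂₎`. -/
def ctarget {C : Type*} [CStarAlgebra C] (ε : C →ₗ[ℂ] ℂ) (w : C) : C ⊗[ℂ] C →ₗ[ℂ] C :=
  (TensorProduct.lid ℂ C).toLinearMap ∘ₗ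
    TensorProduct.map (ε ∘ₗ LinearMap.mulRight ℂ w) LinearMap.id

/-- Sweedler expression `t ↦ t₍₁₎ ε(w t₍₂₎)`; applied to `Δ(1)` this is the
source counital map `ε^s(w) = 1₍₁₎ ε(w 1₍₂₎)`. -/
def csource {C : Type*} [CStarAlgebra C] (ε : C →ₗ[ℂ] ℂ) (w : C) : C ⊗[ℂ] C →ₗ[ℂ] C :=
  (TensorProduct.rid ℂ C).toLinearMap ∘ₗ
    TensorProduct.map LinearMap.id (ε ∘ₗ LinearMap.mulLeft ℂ w)

/-- The tower `B ⊆ A ⊆ A₁ ⊆ A₂` of iterated C*-basic constructions associated to an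
inclusion `B ⊆ A` of simple unital C*-algebras (all realized inside an ambient unital
C*-algebra `C`), together with:  the minimal conditional expectations `E₀ : A → B`,
`E₁ : A₁ → A`, `E₂ : A₂ → A₁`, all of index-finite type;  a quasi-basis `lam` for `E₀`
with scalar index `τ⁻¹` (minimal, i.e. of smallest index);  the Jones projections
`e₁, e₂`;  the Markov-type trace `tr` given on `B' ∩ A₂` by `E₀ ∘ E₁ ∘ E₂`;  and a
quasi-basis `u` for the restriction of `E₁` to the relative commutant `A' ∩ A₁`, whose
Watatani index `k = ∑ uᵢuᵢ*` is invertible with inverse `kinv`. -/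
structure JonesTower (C : Type*) [CStarAlgebra C] where
  B : StarSubalgebra ℂ C
  A : StarSubalgebra ℂ C
  A1 : StarSubalgebra ℂ C
  A2 : StarSubalgebra ℂ C
  hBA : B ≤ A
  hAA1 : A ≤ A1
  hA1A2 : A1 ≤ A2
  simpleB : IsSimpleCStarAlgebra B
  simpleA : IsSimpleCStarAlgebra A
  E0 : CondExpOn C A B
  E1 : CondExpOn C A1 A
  E2 : CondExpOn C A2 A1
  τ : ℝ
  τ_pos : 0 < τ
  nl : ℕ
  lam : Fin nl → C
  lam_qb : IsQuasiBasisOn E0.map (A : Set C) lam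
  qb1 : ∃ (n : ℕ) (v : Fin n → C), IsQuasiBasisOn E1.map (A1 : Set C) v
  qb2 : ∃ (n : ℕ) (v : Fin n → C), IsQuasiBasisOn E2.map (A2 : Set C) v
  lam_index : ∑ i, lam i * star (lam i) = ((τ⁻¹ : ℝ) : ℂ) • 1
  E0_minimal : ∀ (E' : CondExpOn C A B) (n : ℕ) (v : Fin n → C) (c : ℝ),
      IsQuasiBasisOn E'.map (A : Set C) v →
      (∑ i, v i * star (v i)) = ((c : ℝ) : ℂ) • 1 → τ⁻¹ ≤ c
  e1 : C
  e2 : C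
  e1_mem : e1 ∈ A1
  e2_mem : e2 ∈ A2
  e1_star : star e1 = e1
  e2_star : star e2 = e2
  e1_idem : e1 * e1 = e1
  e2_idem : e2 * e2 = e2
  e1_comm : ∀ b ∈ B, e1 * b = b * e1
  e2_comm : ∀ a ∈ A, e2 * a = a * e2
  e1_jones : ∀ x ∈ A, e1 * x * e1 = E0.map x * e1
  e2_jones : ∀ x ∈ A1, e2 * x * e2 = E1.map x * e2
  E1_e1 : E1.map e1 = ((τ : ℝ) : ℂ) • 1
  E2_e2 : E2.map e2 = ((τ : ℝ) : ℂ) • 1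
  gen1 : A1 = (StarAlgebra.adjoin ℂ ((A : Set C) ∪ {e1})).topologicalClosure
  gen2 : A2 = (StarAlgebra.adjoin ℂ ((A1 : Set C) ∪ {e2})).topologicalClosure
  tr : C →ₗ[ℂ] ℂ
  tr_def : ∀ x ∈ A2, (∀ b ∈ B, b * x = x * b) →
      E0.map (E1.map (E2.map x)) = tr x • 1
  nu : ℕ
  u : Fin nu → C
  u_qb : IsQuasiBasisOn E1.map {x | x ∈ A1 ∧ ∀ a ∈ A, a * x = x * a} u
  kinv : C
  kinv_k : kinv * (∑ i, u i * star (u i)) = 1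
  k_kinv : (∑ i, u i * star (u i)) * kinv = 1

namespace JonesTower

variable {C : Type*} [CStarAlgebra C] (T : JonesTower C)

/-- The relative commutant `P = B' ∩ A₁`. -/
def P : Submodule ℂ C := relativeCommutant T.B T.A1

/-- The relative commutant `Q = A' ∩ A₂`. -/
def Q : Submodule ℂ C := relativeCommutant T.A T.A2

/-- `k = Ind_W (E₁|_{A' ∩ A₁}) = ∑ᵢ uᵢ uᵢ*`, the Watatani index of the restriction of
`E₁` to `A' ∩ A₁`. -/
def k : C := ∑ i, T.u i * star (T.u i)

/-- `d = ‖k‖₂ = tr(k* k)^{1/2}`. -/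
def d : ℝ := Real.sqrt (T.tr (star T.k * T.k)).re

/-- The Nikshych–Vainerman pairing `⟨x, w⟩ = d τ⁻² tr(x e₂ e₁ w)`. -/
def pairNV (x w : C) : ℂ :=
  (T.d : ℂ) * ((T.τ : ℂ)⁻¹) ^ 2 * T.tr (x * T.e2 * T.e1 * w)

/-- The NV pairing as a linear functional in its second variable. -/
def pairL (x : C) : C →ₗ[ℂ] ℂ :=
  ((T.d : ℂ) * ((T.τ : ℂ)⁻¹) ^ 2) • (T.tr ∘ₗ LinearMap.mulLeft ℂ (x * T.e2 * T.e1))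

/-- The NV pairing as a linear functional in its first variable. -/
def pairR (w : C) : C →ₗ[ℂ] ℂ :=
  ((T.d : ℂ) * ((T.τ : ℂ)⁻¹) ^ 2) • (T.tr ∘ₗ LinearMap.mulRight ℂ (T.e2 * (T.e1 * w)))

/-- The subspace `Q ⊗ Q` of `C ⊗ C`. -/
def QQ : Submodule ℂ (C ⊗[ℂ] C) :=
  Submodule.span ℂ {t | ∃ a ∈ T.Q, ∃ b ∈ T.Q, t = a ⊗ₜ[ℂ] b}

/-- The subspace `P ⊗ P` of `C ⊗ C`. -/
def PP : Submodule ℂ (C ⊗[ℂ] C) :=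
  Submodule.span ℂ {t | ∃ a ∈ T.P, ∃ b ∈ T.P, t = a ⊗ₜ[ℂ] b}

/-- The reflection operator `r⁻₁(w) = τ⁻² ∑ᵢ λᵢ e₁ e₂ E₂(w e₁ e₂ λᵢ*)`. -/
def rminus (w : C) : C :=
  (((T.τ : ℂ)⁻¹) ^ 2) •
    ∑ i, T.lam i * T.e1 * T.e2 * T.E2.map (w * T.e1 * T.e2 * star (T.lam i))

/-- The reflection operator `r⁺₁(x) = τ⁻¹ ∑ᵢ E₁(e₁ λᵢ x) e₁ λᵢ*`. -/
def rplus (x : C) : C :=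
  ((T.τ : ℂ)⁻¹) • ∑ i, T.E1.map (T.e1 * T.lam i * x) * T.e1 * star (T.lam i)

/-- The inclusion `B ⊆ A` has depth 2: `(B' ∩ A₁) e₂ (B' ∩ A₁) = B' ∩ A₂`
(as linear spans). -/
def DepthTwo : Prop :=
  Submodule.span ℂ {z | ∃ x ∈ T.P, ∃ y ∈ T.P, z = x * T.e2 * y} =
    relativeCommutant T.B T.A2

/-- The comultiplication, counit and antipode on `Q = A' ∩ A₂` determined by the
Nikshych–Vainerman pairing:  `⟨x₁x₂, w⟩ = ⟨x₁, w₍₁₎⟩⟨x₂, w₍₂₎⟩`,  `ε(w) = ⟨1, w⟩`, and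
`⟨x, S(w)⟩ = conj ⟨x*, w*⟩`. -/
structure NVData where
  Δ : C →ₗ[ℂ] C ⊗[ℂ] C
  ε : C →ₗ[ℂ] ℂ
  S : C →ₗ[ℂ] C
  Δ_mem : ∀ w ∈ T.Q, Δ w ∈ T.QQ
  S_mem : ∀ w ∈ T.Q, S w ∈ T.Q
  Δ_pair : ∀ x₁ ∈ T.P, ∀ x₂ ∈ T.P, ∀ w ∈ T.Q,
      T.pairNV (x₁ * x₂) w = pairT (T.pairL x₁) (T.pairL x₂) (Δ w)
  ε_pair : ∀ w ∈ T.Q, ε w = T.pairNV 1 w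
  S_pair : ∀ x ∈ T.P, ∀ w ∈ T.Q,
      T.pairNV x (S w) = starRingEnd ℂ (T.pairNV (star x) (star w))

variable {T}

/-- The deformed comultiplication `Δ̃(w) = d (1 ⊗ k⁻¹) Δ(w)`. -/
def tΔ (D : T.NVData) : C →ₗ[ℂ] C ⊗[ℂ] C :=
  (T.d : ℂ) • ((LinearMap.mulLeft ℂ ((1 : C) ⊗ₜ[ℂ] T.kinv)) ∘ₗ D.Δ)

/-- The deformed counit `ε̃(w) = d⁻¹ ε(k w)`. -/
def tε (D : T.NVData) : C →ₗ[ℂ] ℂ :=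
  ((T.d : ℂ))⁻¹ • (D.ε ∘ₗ LinearMap.mulLeft ℂ T.k)

/-- The deformed antipode `S̃(w) = S(k w k⁻¹)`. -/
def tS (D : T.NVData) : C →ₗ[ℂ] C :=
  D.S ∘ₗ (LinearMap.mulRight ℂ T.kinv ∘ₗ LinearMap.mulLeft ℂ T.k)

end JonesTower

/-- `(Q, Δ, ε, S)` is a weak C*-Hopf algebra, where `Q` is a (necessarily
finite-dimensional) subspace of the ambient C*-algebra `C`, `dag` is the involution of
`Q` and `dagT` is the induced componentwise involution of `Q ⊗ Q`.  This records:
`Q` is a unital algebra, `dag` is an (isometrically positive-definite, i.e. C*-)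
involution, `Δ` is a `dag`-preserving algebra map, `(Q, Δ, ε)` is a coalgebra,
the weak bialgebra axioms for `ε` and `Δ(1)`, and the antipode axioms for `S`. -/
structure IsWeakCStarHopfOn {C : Type*} [CStarAlgebra C]
    (Qc : Submodule ℂ C) (QQc : Submodule ℂ (C ⊗[ℂ] C))
    (dag : C →ₛₗ[starRingEnd ℂ] C) (dagT : C ⊗[ℂ] C → C ⊗[ℂ] C)
    (Δ : C →ₗ[ℂ] C ⊗[ℂ] C) (ε : C →ₗ[ℂ] ℂ) (S : C →ₗ[ℂ] C) : Prop where
  one_mem : (1 : C) ∈ Qc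
  mul_mem : ∀ w ∈ Qc, ∀ w' ∈ Qc, w * w' ∈ Qc
  findim : FiniteDimensional ℂ Qc
  dag_mem : ∀ w ∈ Qc, dag w ∈ Qc
  dag_invol : ∀ w ∈ Qc, dag (dag w) = w
  dag_mul : ∀ w ∈ Qc, ∀ w' ∈ Qc, dag (w * w') = dag w' * dag w
  dag_cstar : ∀ w ∈ Qc, dag w * w = 0 → w = 0
  Δ_mem : ∀ w ∈ Qc, Δ w ∈ QQc
  S_mem : ∀ w ∈ Qc, S w ∈ Qc
  Δ_mul : ∀ w ∈ Qc, ∀ w' ∈ Qc, Δ (w * w') = Δ w * Δ w'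
  Δ_star : ∀ w ∈ Qc, Δ (dag w) = dagT (Δ w)
  coassoc : ∀ w ∈ Qc,
      (TensorProduct.assoc ℂ C C C) ((TensorProduct.map Δ LinearMap.id) (Δ w))
        = (TensorProduct.map LinearMap.id Δ) (Δ w)
  counit_left : ∀ w ∈ Qc, counitL ε (Δ w) = w
  counit_right : ∀ w ∈ Qc, counitR ε (Δ w) = w
  eps_weak : ∀ w ∈ Qc, ∀ w' ∈ Qc, ∀ w'' ∈ Qc,
      ε (w * w' * w'') =
        pairT (ε ∘ₗ LinearMap.mulLeft ℂ w) (ε ∘ₗ LinearMap.mulRight ℂ w'') (Δ w')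
  eps_weak' : ∀ w ∈ Qc, ∀ w' ∈ Qc, ∀ w'' ∈ Qc,
      ε (w * w' * w'') =
        pairT (ε ∘ₗ LinearMap.mulRight ℂ w'') (ε ∘ₗ LinearMap.mulLeft ℂ w) (Δ w')
  delta_one_left :
      (TensorProduct.assoc ℂ C C C).symm ((TensorProduct.map LinearMap.id Δ) (Δ 1))
        = ((Δ 1) ⊗ₜ[ℂ] (1 : C)) *
            ((TensorProduct.assoc ℂ C C C).symm ((1 : C) ⊗ₜ[ℂ] (Δ 1)))
  delta_one_right :
      (TensorProduct.assoc ℂ C C C).symm ((TensorProduct.map LinearMap.id Δ) (Δ 1))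
        = ((TensorProduct.assoc ℂ C C C).symm ((1 : C) ⊗ₜ[ℂ] (Δ 1))) *
            ((Δ 1) ⊗ₜ[ℂ] (1 : C))
  antipode_left : ∀ w ∈ Qc,
      LinearMap.mul' ℂ C ((TensorProduct.map LinearMap.id S) (Δ w)) = ctarget ε w (Δ 1)
  antipode_right : ∀ w ∈ Qc,
      LinearMap.mul' ℂ C ((TensorProduct.map S LinearMap.id) (Δ w)) = csource ε w (Δ 1)
  antipode_mid : ∀ w ∈ Qc,
      LinearMap.mul' ℂ C
        ((TensorProduct.map (LinearMap.mul' ℂ C ∘ₗ TensorProduct.map S LinearMap.id) S)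
          ((TensorProduct.map Δ LinearMap.id) (Δ w))) = S w

/-- A left action of a weak C*-Hopf algebra `(Hc, Δ, ε, S, dag)` (realized inside the
ambient algebra `C`) on the C*-subalgebra `Ac`, given as a bilinear map `act`. -/
structure IsWeakHopfActionOn {C : Type*} [CStarAlgebra C]
    (Hc : Submodule ℂ C) (Ac : StarSubalgebra ℂ C)
    (Δ : C →ₗ[ℂ] C ⊗[ℂ] C) (ε : C →ₗ[ℂ] ℂ) (S : C →ₗ[ℂ] C) (dag : C → C)
    (act : C →ₗ[ℂ] C →ₗ[ℂ] C) : Prop where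
  act_mem : ∀ y ∈ Hc, ∀ a ∈ Ac, act y a ∈ Ac
  one_act : ∀ a ∈ Ac, act 1 a = a
  mul_act : ∀ y ∈ Hc, ∀ y' ∈ Hc, ∀ a ∈ Ac, act (y * y') a = act y (act y' a)
  leibniz : ∀ y ∈ Hc, ∀ a ∈ Ac, ∀ a' ∈ Ac,
      act y (a * a') =
        LinearMap.mul' ℂ C ((TensorProduct.map (act.flip a) (act.flip a')) (Δ y))
  star_act : ∀ y ∈ Hc, ∀ a ∈ Ac, star (act y a) = act (dag (S y)) (star a)
  unit_act : ∀ y ∈ Hc, act y 1 = act (ctarget ε y (Δ 1)) 1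
  unit_act_zero : ∀ y ∈ Hc, (act y 1 = 0 ↔ ctarget ε y (Δ 1) = 0)
/-- The conjugate-linear involution `w ↦ gi (star w) g` of `C` (for `gi = g⁻¹` this is
the involution `w† = g⁻¹ w* g`). -/
def conjStar {C : Type*} [CStarAlgebra C] (g gi : C) : C →ₛₗ[starRingEnd ℂ] C where
  toFun w := gi * star w * g
  map_add' w w' := by rw [star_add, mul_add, add_mul]
  map_smul' c w := by
    simp only [star_smul, mul_smul_comm, smul_mul_assoc, starRingEnd_apply]

/-- The map `(x, a) ↦ x₍₁₎ a S(x₍₂₎)`, as a bilinear map, built from a comultiplication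
`Δ` and an antipode `S`. -/
def hopfAct {C : Type*} [CStarAlgebra C] (Δ : C →ₗ[ℂ] C ⊗[ℂ] C) (S : C →ₗ[ℂ] C) :
    C →ₗ[ℂ] C →ₗ[ℂ] C :=
  LinearMap.mk₂ ℂ
    (fun x a =>
      LinearMap.mul' ℂ C ((TensorProduct.map ((LinearMap.mul ℂ C).flip a) S) (Δ x)))
    (fun x x' a => by simp)
    (fun c x a => by simp)
    (fun x a a' => by simp [TensorProduct.map_add_left])
    (fun c x a => by simp [TensorProduct.map_smul_left])

namespace JonesTower

variable {C : Type*} [CStarAlgebra C]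

/-- The action `w ▷ x = τ⁻¹ E₂(w x e₂)` of `Q = A' ∩ A₂` on `A₁`, as a bilinear map. -/
def qact (T : JonesTower C) : C →ₗ[ℂ] C →ₗ[ℂ] C :=
  LinearMap.mk₂ ℂ (fun w x => (T.τ : ℂ)⁻¹ • T.E2.map (w * x * T.e2))
    (fun w w' x => by rw [add_mul, add_mul, map_add, smul_add])
    (fun c w x => by rw [smul_mul_assoc, smul_mul_assoc, map_smul, smul_comm])
    (fun w x x' => by rw [mul_add, add_mul, map_add, smul_add])
    (fun c w x => by rw [mul_smul_comm, smul_mul_assoc, map_smul, smul_comm])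

/-- The weak C*-Hopf algebra structure `(Δ_P, ε_P, S_P)` on `P = B' ∩ A₁` which is dual,
via the Nikshych–Vainerman pairing, to the deformed weak C*-Hopf algebra structure
`(Q, Δ̃, ε̃, S̃)`:  the multiplication of `P` is dual to `Δ̃`, the comultiplication of `P`
is dual to the multiplication of `Q`, the counit of `P` is evaluation against `1 ∈ Q`,
the unit of `P` pairs as `ε̃`, and the antipode of `P` is dual to `S̃`. -/
structure DualData (T : JonesTower C) (D : T.NVData) where
  ΔP : C →ₗ[ℂ] C ⊗[ℂ] C
  εP : C →ₗ[ℂ] ℂ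
  SP : C →ₗ[ℂ] C
  ΔP_mem : ∀ x ∈ T.P, ΔP x ∈ T.PP
  SP_mem : ∀ x ∈ T.P, SP x ∈ T.P
  mul_dual : ∀ x ∈ T.P, ∀ x' ∈ T.P, ∀ w ∈ T.Q,
      T.pairNV (x * x') w = pairT (T.pairL x) (T.pairL x') (tΔ D w)
  ΔP_dual : ∀ x ∈ T.P, ∀ w ∈ T.Q, ∀ w' ∈ T.Q,
      pairT (T.pairR w) (T.pairR w') (ΔP x) = T.pairNV x (w * w')
  εP_dual : ∀ x ∈ T.P, εP x = T.pairNV x 1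
  one_dual : ∀ w ∈ T.Q, T.pairNV 1 w = tε D w
  SP_dual : ∀ x ∈ T.P, ∀ w ∈ T.Q, T.pairNV (SP x) w = T.pairNV x (tS D w)

end JonesTower

/-!
Both halves reduce to faithfulness of `E₀ ∘ E₁` on `A₁`; a conditional expectation admitting a
quasi-basis is faithful by a Cauchy–Schwarz argument. For `x ∈ P` and `w ∈ Q` one has
`tr (x e₂ e₁ w) = E₀ E₁ (x m)` with `m = E₂ (e₂ e₁ w) ∈ P`, and `d τ⁻² ≠ 0` because `k` is
invertible.

If `w` pairs trivially with `P`, taking `x = m*` gives `m = 0`. The pull-down identity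
`e₂ z = τ⁻¹ e₂ E₂ (e₂ z)` on `A₂` then gives `e₂ e₁ w = 0`, hence `e₁ w = τ⁻¹ e₁ e₂ e₁ w = 0`, and
`w = ∑ λᵢ e₁ λᵢ* w = ∑ λᵢ e₁ w λᵢ* = 0`. Conversely, for `x ∈ P` the element
`w = ∑ λᵢ e₁ e₂ x* λᵢ*` lies in `Q` and satisfies `E₂ (e₂ e₁ w) = τ² x*`, so `⟨x, w⟩ = 0` forces
`E₀ E₁ (x x*) = 0`, i.e. `x = 0`.
-/

open scoped ComplexOrder

namespace CondExpOn

variable {C : Type*} [CStarAlgebra C] {Ac Bc : StarSubalgebra ℂ C} (E : CondExpOn C Ac Bc)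

lemma map_one : E.map 1 = 1 := E.fixes 1 (one_mem _)

lemma map_mul_left {b x : C} (hb : b ∈ Bc) (hx : x ∈ Ac) : E.map (b * x) = b * E.map x := by
  simpa using E.bimodule b hb 1 (one_mem _) x hx

lemma map_mul_right {x b : C} (hx : x ∈ Ac) (hb : b ∈ Bc) : E.map (x * b) = E.map x * b := by
  simpa using E.bimodule 1 (one_mem _) b hb x hx

section Order

variable [PartialOrder C] [StarOrderedRing C]

lemma map_star_mul_self_nonneg {x : C} (hx : x ∈ Ac) : 0 ≤ E.map (star x * x) := by
  obtain ⟨y, -, hy⟩ := E.positive x hx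
  exact hy ▸ star_mul_self_nonneg y

/-- Positivity of `E (z* z)` for `z = r x - y b`, where `b = E (y* x)`. -/
lemma smul_star_mul_self_le_of_map_star_mul_self_eq_zero {x y : C} (hBA : Bc ≤ Ac)
    (hx : x ∈ Ac) (hy : y ∈ Ac) (h : E.map (star x * x) = 0) (r : ℝ) :
    ((2 * r : ℝ) : ℂ) • (star (E.map (star y * x)) * E.map (star y * x))
      ≤ star (E.map (star y * x)) * E.map (star y * y) * E.map (star y * x) := by
  set b := E.map (star y * x)
  have hb : b ∈ Bc := E.mem_of_mem _ (mul_mem (star_mem hy) hx)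
  have hz : (r : ℂ) • x - y * b ∈ Ac :=
    sub_mem (SMulMemClass.smul_mem _ hx) (mul_mem hy (hBA hb))
  have h1 : E.map (star b * (star y * x)) = star b * b :=
    E.map_mul_left (star_mem hb) (mul_mem (star_mem hy) hx)
  have h2 : E.map (star x * (y * b)) = star b * b := by
    rw [← mul_assoc, E.map_mul_right (mul_mem (star_mem hx) hy) hb,
      ← E.star_map _ (mul_mem (star_mem hy) hx), star_mul, star_star]
  have h3 : E.map (star b * (star y * (y * b))) = star b * (E.map (star y * y) * b) := by
    rw [← mul_assoc (star y), ← mul_assoc,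
      E.bimodule _ (star_mem hb) _ hb _ (mul_mem (star_mem hy) hy), mul_assoc]
  have hexp : E.map (star ((r : ℂ) • x - y * b) * ((r : ℂ) • x - y * b))
      = star b * E.map (star y * y) * b - ((2 * r : ℝ) : ℂ) • (star b * b) := by
    rw [star_sub, star_smul, star_mul, Complex.star_def, Complex.conj_ofReal]
    simp only [sub_mul, mul_sub, smul_mul_assoc, mul_smul_comm, map_sub, map_smul, mul_assoc]
    rw [h, h1, h2, h3]
    push_cast
    module
  rw [← sub_nonneg, ← hexp]
  exact E.map_star_mul_self_nonneg hz

lemma map_star_mul_eq_zero (hBA : Bc ≤ Ac) {x y : C} (hx : x ∈ Ac) (hy : y ∈ Ac)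
    (h : E.map (star x * x) = 0) : E.map (star y * x) = 0 := by
  set b := E.map (star y * x)
  set c := star b * E.map (star y * y) * b
  have hnorm : ∀ r : ℝ, 0 < r → 2 * r * ‖b‖ ^ 2 ≤ ‖c‖ := fun r hr => by
    have h := CStarAlgebra.norm_le_norm_of_nonneg_of_le
      (smul_nonneg (by positivity) (star_mul_self_nonneg b))
      (E.smul_star_mul_self_le_of_map_star_mul_self_eq_zero hBA hx hy h r)
    rwa [norm_smul, CStarRing.norm_star_mul_self, Complex.norm_real,
      Real.norm_of_nonneg (by positivity), ← sq] at h
  by_contra hb0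
  have hpos : 0 < ‖b‖ ^ 2 := by positivity
  have := hnorm ((‖c‖ + 1) / ‖b‖ ^ 2) (by positivity)
  rw [mul_assoc, div_mul_cancel₀ _ hpos.ne'] at this
  linarith [norm_nonneg c]

lemma star_map_mul_map_le (hBA : Bc ≤ Ac) {z : C} (hz : z ∈ Ac) :
    star (E.map z) * E.map z ≤ E.map (star z * z) := by
  set m := E.map z
  have hm : m ∈ Bc := E.mem_of_mem z hz
  have h1 : E.map (star z * m) = star m * m := by
    rw [E.map_mul_right (star_mem hz) hm, E.star_map z hz]
  have h2 : E.map (star m * z) = star m * m := E.map_mul_left (star_mem hm) hz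
  have h3 : E.map (star m * m) = star m * m := E.fixes _ (mul_mem (star_mem hm) hm)
  have hexp : E.map (star (z - m) * (z - m)) = E.map (star z * z) - star m * m := by
    rw [star_sub, sub_mul, mul_sub, mul_sub, map_sub, map_sub, map_sub, h1, h2, h3]
    abel
  rw [← sub_nonneg, ← hexp]
  exact E.map_star_mul_self_nonneg (sub_mem hz (hBA hm))

lemma map_star_mul_self_le_norm (hBA : Bc ≤ Ac) (hAc : IsClosed (Ac : Set C)) {z : C}
    (hz : z ∈ Ac) :
    E.map (star z * z) ≤ algebraMap ℝ C ‖star z * z‖ := by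
  set r := ‖star z * z‖
  have hr : algebraMap ℝ C r ∈ Bc := by
    rw [IsScalarTower.algebraMap_apply ℝ ℂ C]
    exact algebraMap_mem Bc _
  have hsq : 0 ≤ algebraMap ℝ C r - star z * z :=
    sub_nonneg.mpr (IsSelfAdjoint.star_mul_self z).le_algebraMap_norm_self
  have hs : CFC.sqrt (algebraMap ℝ C r - star z * z) ∈ Ac := by
    have : IsClosed (Ac : Set C) := hAc
    rw [CFC.sqrt_eq_real_sqrt _ hsq]
    exact cfcₙ_mem _ (sub_mem (hBA hr) (mul_mem (star_mem hz) hz))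
  have := E.map_star_mul_self_nonneg hs
  rwa [(CFC.sqrt_nonneg _).star_eq, CFC.sqrt_mul_sqrt_self _ hsq, map_sub, E.fixes _ hr,
    sub_nonneg] at this

end Order

lemma norm_map_le (hBA : Bc ≤ Ac) (hAc : IsClosed (Ac : Set C)) {z : C} (hz : z ∈ Ac) :
    ‖E.map z‖ ≤ ‖z‖ := by
  nontriviality C
  let _ := CStarAlgebra.spectralOrder C
  have _ := CStarAlgebra.spectralOrderedRing C
  have h := CStarAlgebra.norm_le_norm_of_nonneg_of_le (star_mul_self_nonneg _)
    ((E.star_map_mul_map_le hBA hz).trans (E.map_star_mul_self_le_norm hBA hAc hz))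
  rw [norm_algebraMap', norm_norm, CStarRing.norm_star_mul_self,
    CStarRing.norm_star_mul_self] at h
  exact mul_self_le_mul_self_iff (norm_nonneg _) (norm_nonneg _) |>.mpr h

lemma continuousOn (hBA : Bc ≤ Ac) (hAc : IsClosed (Ac : Set C)) : ContinuousOn E.map Ac := by
  refine (LipschitzOnWith.of_dist_le_mul fun x hx y hy => ?_).continuousOn (K := 1)
  rw [dist_eq_norm, dist_eq_norm, ← map_sub, NNReal.coe_one, one_mul]
  exact E.norm_map_le hBA hAc (sub_mem hx hy)

lemma eq_zero_of_map_star_mul_self_eq_zero (hBA : Bc ≤ Ac) {n : ℕ} {u : Fin n → C}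
    (hu : IsQuasiBasisOn E.map Ac u) {x : C} (hx : x ∈ Ac) (h : E.map (star x * x) = 0) :
    x = 0 := by
  let _ := CStarAlgebra.spectralOrder C
  have _ := CStarAlgebra.spectralOrderedRing C
  rw [← hu.left x hx]
  exact Finset.sum_eq_zero fun i _ => by
    rw [E.map_star_mul_eq_zero hBA hx (hu.mem i) h, mul_zero]

lemma eq_zero_of_isStarProjection (hBA : Bc ≤ Ac) {n : ℕ} {u : Fin n → C}
    (hu : IsQuasiBasisOn E.map Ac u) {p : C} (hpA : p ∈ Ac) (hp : IsStarProjection p)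
    (h : E.map p = 0) : p = 0 :=
  E.eq_zero_of_map_star_mul_self_eq_zero hBA hu hpA <| by
    rwa [hp.isSelfAdjoint.star_eq, hp.isIdempotentElem.eq]

end CondExpOn

lemma IsQuasiBasisOn.commute_sum_mul_mul_star {C : Type*} [CStarAlgebra C]
    {Ac Bc : StarSubalgebra ℂ C} {E : CondExpOn C Ac Bc} {n : ℕ} {u : Fin n → C}
    (hu : IsQuasiBasisOn E.map Ac u) {y : C} (hy : ∀ b ∈ Bc, Commute b y) {a : C}
    (ha : a ∈ Ac) : Commute a (∑ i, u i * y * star (u i)) := by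
  -- expand `a uᵢ` and `uⱼ* a` in the quasi-basis; the coefficients `E (uⱼ* a uᵢ)` commute with `y`
  have hcoeff : ∀ i j, Commute (E.map (star (u j) * a * u i)) y := fun i j =>
    hy _ (E.mem_of_mem _ (mul_mem (mul_mem (star_mem (hu.mem j)) ha) (hu.mem i)))
  calc a * ∑ i, u i * y * star (u i)
      = ∑ i, ∑ j, u j * E.map (star (u j) * a * u i) * y * star (u i) := by
        rw [Finset.mul_sum]
        refine Finset.sum_congr rfl fun i _ => ?_
        rw [← mul_assoc, ← mul_assoc, ← hu.left (a * u i) (mul_mem ha (hu.mem i)),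
          Finset.sum_mul, Finset.sum_mul]
        simp only [mul_assoc]
    _ = ∑ j, u j * y * ∑ i, E.map (star (u j) * a * u i) * star (u i) := by
        rw [Finset.sum_comm]
        refine Finset.sum_congr rfl fun j _ => ?_
        rw [Finset.mul_sum]
        refine Finset.sum_congr rfl fun i _ => ?_
        rw [mul_assoc (u j), (hcoeff i j).eq]
        simp only [mul_assoc]
    _ = (∑ i, u i * y * star (u i)) * a := by
        rw [Finset.sum_mul]
        refine Finset.sum_congr rfl fun j _ => ?_
        rw [hu.right _ (mul_mem (star_mem (hu.mem j)) ha)]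
        simp only [mul_assoc]

namespace JonesTower

variable {C : Type*} [CStarAlgebra C] (T : JonesTower C)

lemma mem_P_iff {x : C} : x ∈ T.P ↔ x ∈ T.A1 ∧ ∀ b ∈ T.B, Commute b x := Iff.rfl

lemma mem_Q_iff {w : C} : w ∈ T.Q ↔ w ∈ T.A2 ∧ ∀ a ∈ T.A, Commute a w := Iff.rfl

lemma star_mem_P {x : C} (hx : x ∈ T.P) : star x ∈ T.P :=
  T.mem_P_iff.mpr ⟨star_mem hx.1, fun b hb => by
    simpa using ((T.mem_P_iff.mp hx).2 (star b) (star_mem hb)).star_star⟩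

lemma commute_e1 {b : C} (hb : b ∈ T.B) : Commute b T.e1 := (T.e1_comm b hb).symm

lemma commute_e2 {a : C} (ha : a ∈ T.A) : Commute a T.e2 := (T.e2_comm a ha).symm

lemma lam_mem_A1 (i : Fin T.nl) : T.lam i ∈ T.A1 := T.hAA1 (T.lam_qb.mem i)

lemma tau_ne_zero : (T.τ : ℂ) ≠ 0 := Complex.ofReal_ne_zero.mpr T.τ_pos.ne'

lemma isSelfAdjoint_tau_inv : IsSelfAdjoint (T.τ : ℂ)⁻¹ := by
  rw [IsSelfAdjoint, star_inv₀, Complex.star_def, Complex.conj_ofReal]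

lemma e1_mul_mul_e1 {a : C} (ha : a ∈ T.A) (X : C) :
    T.e1 * (a * (T.e1 * X)) = T.E0.map a * (T.e1 * X) := by
  rw [← mul_assoc, ← mul_assoc, T.e1_jones a ha, mul_assoc]

lemma e2_mul_e1_mul_e2 : T.e2 * T.e1 * T.e2 = (T.τ : ℂ) • T.e2 := by
  rw [T.e2_jones _ T.e1_mem, T.E1_e1, smul_mul_assoc, one_mul]

lemma E2_mul_e2_mul {a c : C} (ha : a ∈ T.A1) (hc : c ∈ T.A1) :
    T.E2.map (a * T.e2 * c) = (T.τ : ℂ) • (a * c) := by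
  rw [T.E2.bimodule a ha c hc _ T.e2_mem, T.E2_e2, mul_smul_comm, smul_mul_assoc, mul_one]

lemma isStarProjection_e1 : IsStarProjection T.e1 := ⟨T.e1_idem, T.e1_star⟩

lemma e1_mul_e2_mul_e1 : T.e1 * T.e2 * T.e1 = (T.τ : ℂ) • T.e1 := by
  obtain ⟨_, _, hv⟩ := T.qb2
  set q := (T.τ : ℂ)⁻¹ • (T.e1 * T.e2 * T.e1)
  have hq : IsStarProjection q := by
    refine ⟨?_, T.isSelfAdjoint_tau_inv.smul ?_⟩
    · have hsq : T.e1 * T.e2 * T.e1 * (T.e1 * T.e2 * T.e1) = (T.τ : ℂ) • (T.e1 * T.e2 * T.e1) :=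
        calc _ = T.e1 * T.e2 * (T.e1 * T.e1) * T.e2 * T.e1 := by simp only [mul_assoc]
          _ = T.e1 * (T.e2 * T.e1 * T.e2) * T.e1 := by rw [T.e1_idem]; simp only [mul_assoc]
          _ = _ := by rw [T.e2_mul_e1_mul_e2, mul_smul_comm, smul_mul_assoc]
      rw [IsIdempotentElem, smul_mul_smul_comm, hsq, smul_smul, mul_assoc,
        inv_mul_cancel₀ T.tau_ne_zero, mul_one]
    · rw [IsSelfAdjoint, star_mul, star_mul, T.e1_star, T.e2_star, mul_assoc]
  have hqe1 : q * T.e1 = q := by rw [smul_mul_assoc, mul_assoc, T.e1_idem]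
  have he1A2 : T.e1 ∈ T.A2 := T.hA1A2 T.e1_mem
  have hzero := T.E2.eq_zero_of_isStarProjection T.hA1A2 hv
    (sub_mem he1A2 (SMulMemClass.smul_mem _ (mul_mem (mul_mem he1A2 T.e2_mem) he1A2)))
    (hq.sub_of_mul_eq_left T.isStarProjection_e1 hqe1) (by
      rw [map_sub, map_smul, T.E2.fixes _ T.e1_mem, T.E2_mul_e2_mul T.e1_mem T.e1_mem,
        T.e1_idem, smul_smul, inv_mul_cancel₀ T.tau_ne_zero, one_smul, sub_self])
  exact ((eq_inv_smul_iff₀ T.tau_ne_zero).mp (sub_eq_zero.mp hzero)).symm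

lemma sum_lam_mul_e1_mul_star_lam : ∑ i, T.lam i * T.e1 * star (T.lam i) = 1 := by
  obtain ⟨_, _, hv⟩ := T.qb1
  set f := ∑ i, T.lam i * T.e1 * star (T.lam i) with hf_def
  have hfA1 : f ∈ T.A1 := sum_mem fun i _ =>
    mul_mem (mul_mem (T.lam_mem_A1 i) T.e1_mem) (star_mem (T.lam_mem_A1 i))
  have hf : IsStarProjection f := by
    have hsa : IsSelfAdjoint f := isSelfAdjoint_sum Finset.univ fun i _ =>
      T.isStarProjection_e1.isSelfAdjoint.conjugate _
    refine ⟨?_, hsa⟩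
    rw [IsIdempotentElem]
    conv_lhs => rw [hf_def, Finset.sum_mul]
    refine Finset.sum_congr rfl fun i _ => ?_
    have hcoeff : ∀ j, star (T.lam i) * T.lam j ∈ T.A := fun j =>
      mul_mem (star_mem (T.lam_qb.mem i)) (T.lam_qb.mem j)
    calc T.lam i * T.e1 * star (T.lam i) * f
        = T.lam i * ∑ j, T.e1 * (star (T.lam i) * T.lam j * (T.e1 * star (T.lam j))) := by
          rw [hf_def, Finset.mul_sum, Finset.mul_sum]
          simp only [mul_assoc]
      _ = T.lam i * (T.e1 * ∑ j, T.E0.map (star (T.lam i) * T.lam j) * star (T.lam j)) := by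
          congr 1
          rw [Finset.mul_sum]
          refine Finset.sum_congr rfl fun j _ => ?_
          rw [T.e1_mul_mul_e1 (hcoeff j), ← mul_assoc,
            (T.commute_e1 (T.E0.mem_of_mem _ (hcoeff j))).eq, mul_assoc]
      _ = T.lam i * T.e1 * star (T.lam i) := by
          rw [T.lam_qb.right _ (star_mem (T.lam_qb.mem i)), mul_assoc]
  have hE1 : T.E1.map f = 1 := by
    have hterm : ∀ i, T.E1.map (T.lam i * T.e1 * star (T.lam i))
        = (T.τ : ℂ) • (T.lam i * star (T.lam i)) := fun i => by
      rw [T.E1.bimodule _ (T.lam_qb.mem i) _ (star_mem (T.lam_qb.mem i)) _ T.e1_mem, T.E1_e1,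
        mul_smul_comm, mul_one, smul_mul_assoc]
    rw [hf_def, map_sum, Finset.sum_congr rfl fun i _ => hterm i, ← Finset.smul_sum,
      T.lam_index, smul_smul, Complex.ofReal_inv, mul_inv_cancel₀ T.tau_ne_zero, one_smul]
  have h := T.E1.eq_zero_of_isStarProjection T.hAA1 hv (sub_mem (one_mem _) hfA1) hf.one_sub
    (by rw [map_sub, T.E1.map_one, hE1, sub_self])
  exact (sub_eq_zero.mp h).symm

lemma eq_zero_of_E0_E1_star_mul_self_eq_zero {y : C} (hy : y ∈ T.A1)
    (h : T.E0.map (T.E1.map (star y * y)) = 0) : y = 0 := by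
  obtain ⟨_, _, hv⟩ := T.qb1
  obtain ⟨z, hzA, hz⟩ := T.E1.positive y hy
  rw [hz] at h
  have hz0 : z = 0 := T.E0.eq_zero_of_map_star_mul_self_eq_zero T.hBA T.lam_qb hzA h
  rw [hz0, star_zero, zero_mul] at hz
  exact T.E1.eq_zero_of_map_star_mul_self_eq_zero T.hAA1 hv hy hz

lemma tr_smul_one {x : C} (hx : x ∈ T.A2) (hB : ∀ b ∈ T.B, Commute b x) :
    T.tr x • (1 : C) = T.E0.map (T.E1.map (T.E2.map x)) :=
  (T.tr_def x hx fun b hb => (hB b hb).eq).symm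

lemma k_mem_A1 : T.k ∈ T.A1 :=
  sum_mem fun i _ => mul_mem (T.u_qb.mem i).1 (star_mem (T.u_qb.mem i).1)

lemma commute_k {a : C} (ha : a ∈ T.A) : Commute a T.k := by
  refine Commute.sum_right _ _ _ fun i _ => Commute.mul_right ((T.u_qb.mem i).2 a ha) ?_
  simpa using Commute.star_star ((T.u_qb.mem i).2 (star a) (star_mem ha))

lemma star_k : star T.k = T.k :=
  isSelfAdjoint_sum Finset.univ fun i _ => IsSelfAdjoint.mul_star_self (T.u i)

lemma k_ne_zero [Nontrivial C] : T.k ≠ 0 := fun h =>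
  one_ne_zero (T.kinv_k.symm.trans (by rw [← k, h, mul_zero]))

lemma d_pos [Nontrivial C] : 0 < T.d := by
  let _ := CStarAlgebra.spectralOrder C
  have _ := CStarAlgebra.spectralOrderedRing C
  have hkk : star T.k * T.k ∈ T.A1 := mul_mem (star_mem T.k_mem_A1) T.k_mem_A1
  set c := T.tr (star T.k * T.k)
  have hc : c • (1 : C) = T.E0.map (T.E1.map (star T.k * T.k)) := by
    rw [T.tr_smul_one (T.hA1A2 hkk) fun b hb => ?_, T.E2.fixes _ hkk]
    rw [T.star_k]
    exact (T.commute_k (T.hBA hb)).mul_right (T.commute_k (T.hBA hb))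
  have hne : c • (1 : C) ≠ 0 := hc ▸ fun h =>
    T.k_ne_zero (T.eq_zero_of_E0_E1_star_mul_self_eq_zero T.k_mem_A1 h)
  have hnn : 0 ≤ c • (1 : C) := by
    obtain ⟨y, hyA, hy⟩ := T.E1.positive _ T.k_mem_A1
    rw [hc, hy]
    exact T.E0.map_star_mul_self_nonneg hyA
  have hc0 : 0 ≤ c := spectrum_nonneg_of_nonneg hnn (by
    rw [← Algebra.algebraMap_eq_smul_one, spectrum.scalar_eq]
    rfl)
  have hcpos : 0 < c := hc0.lt_of_ne fun h => hne (by rw [← h, zero_smul])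
  exact Real.sqrt_pos.mpr (Complex.pos_iff.mp hcpos).1

lemma E2_e2_mul {c : C} (hc : c ∈ T.A1) : T.E2.map (T.e2 * c) = (T.τ : ℂ) • c := by
  simpa using T.E2_mul_e2_mul (one_mem _) hc

lemma isClosed_A2 : IsClosed (T.A2 : Set C) := by
  rw [T.gen2]
  exact StarSubalgebra.isClosed_topologicalClosure _

-- The left factor `a` makes the statement stable under products, so it can be proved by induction.
lemma exists_e2_mul_mul_eq_e2_mul {z : C} (hz : z ∈ StarAlgebra.adjoin ℂ ((T.A1 : Set C) ∪ {T.e2}))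
    {a : C} (ha : a ∈ T.A1) : ∃ c ∈ T.A1, T.e2 * a * z = T.e2 * c := by
  have hstar : star ((T.A1 : Set C) ∪ {T.e2}) ⊆ (T.A1 : Set C) ∪ {T.e2} := by
    rintro x (hx | hx)
    · exact Or.inl (by simpa using star_mem (s := T.A1) hx)
    · exact Or.inr (by rw [Set.mem_singleton_iff, ← star_star x, hx, T.e2_star])
  rw [← StarSubalgebra.mem_toSubalgebra, StarAlgebra.adjoin_toSubalgebra,
    Set.union_eq_self_of_subset_right hstar] at hz
  induction hz using Algebra.adjoin_induction generalizing a with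
  | mem x hx =>
    rcases hx with hx | rfl
    · exact ⟨a * x, mul_mem ha hx, mul_assoc _ _ _⟩
    · have hE1a := T.E1.mem_of_mem a ha
      exact ⟨T.E1.map a, T.hAA1 hE1a, by rw [T.e2_jones a ha, (T.commute_e2 hE1a).eq]⟩
  | algebraMap r => exact ⟨a * algebraMap ℂ C r, mul_mem ha (algebraMap_mem _ r), mul_assoc _ _ _⟩
  | add x y _ _ hx hy =>
    obtain ⟨c, hc, hxc⟩ := hx ha
    obtain ⟨c', hc', hyc⟩ := hy ha
    exact ⟨c + c', add_mem hc hc', by rw [mul_add, hxc, hyc, mul_add]⟩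
  | mul x y _ _ hx hy =>
    obtain ⟨c, hc, hxc⟩ := hx ha
    obtain ⟨c', hc', hyc⟩ := hy hc
    exact ⟨c', hc', by rw [← mul_assoc, hxc, hyc]⟩

lemma e2_mul_eq_smul_e2_mul_E2 {z : C} (hz : z ∈ T.A2) :
    T.e2 * z = (T.τ : ℂ)⁻¹ • (T.e2 * T.E2.map (T.e2 * z)) := by
  set D := StarAlgebra.adjoin ℂ ((T.A1 : Set C) ∪ {T.e2})
  have hA2 : (T.A2 : Set C) = closure D := by rw [T.gen2, StarSubalgebra.topologicalClosure_coe]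
  have hE2 : ContinuousOn (fun z => T.E2.map (T.e2 * z)) T.A2 :=
    (T.E2.continuousOn T.hA1A2 T.isClosed_A2).comp (continuous_const_mul _).continuousOn
      fun z hz => mul_mem T.e2_mem hz
  refine Set.EqOn.of_subset_closure (f := fun z => T.e2 * z)
    (g := fun z => (T.τ : ℂ)⁻¹ • (T.e2 * T.E2.map (T.e2 * z))) (fun z hz => ?_)
    (continuous_const_mul _).continuousOn
    ((continuousOn_const.mul hE2).const_smul _) (by rw [hA2]; exact subset_closure) hA2.subset hz
  obtain ⟨c, hc, hzc⟩ := T.exists_e2_mul_mul_eq_e2_mul hz (one_mem _)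
  rw [mul_one] at hzc
  beta_reduce
  rw [hzc, T.E2_e2_mul hc, mul_smul_comm, inv_smul_smul₀ T.tau_ne_zero]

lemma commute_e2_mul_e1_mul {w : C} (hw : w ∈ T.Q) {b : C} (hb : b ∈ T.B) :
    Commute b (T.e2 * T.e1 * w) :=
  ((T.commute_e2 (T.hBA hb)).mul_right (T.commute_e1 hb)).mul_right
    ((T.mem_Q_iff.mp hw).2 b (T.hBA hb))

lemma e2_mul_e1_mul_mem_A2 {w : C} (hw : w ∈ T.A2) : T.e2 * T.e1 * w ∈ T.A2 :=
  mul_mem (mul_mem T.e2_mem (T.hA1A2 T.e1_mem)) hw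

lemma E2_e2_mul_e1_mul_mem_P {w : C} (hw : w ∈ T.Q) : T.E2.map (T.e2 * T.e1 * w) ∈ T.P := by
  have hmem := T.e2_mul_e1_mul_mem_A2 hw.1
  refine T.mem_P_iff.mpr ⟨T.E2.mem_of_mem _ hmem, fun b hb => ?_⟩
  have hb1 : b ∈ T.A1 := T.hAA1 (T.hBA hb)
  rw [Commute, SemiconjBy, ← T.E2.map_mul_left hb1 hmem, ← T.E2.map_mul_right hmem hb1,
    (T.commute_e2_mul_e1_mul hw hb).eq]

lemma tr_mul_e2_mul_e1_mul_smul_one {x w : C} (hx : x ∈ T.P) (hw : w ∈ T.Q) :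
    T.tr (x * T.e2 * T.e1 * w) • (1 : C)
      = T.E0.map (T.E1.map (x * T.E2.map (T.e2 * T.e1 * w))) := by
  have hmem := T.e2_mul_e1_mul_mem_A2 hw.1
  have hassoc : x * T.e2 * T.e1 * w = x * (T.e2 * T.e1 * w) := by simp only [mul_assoc]
  rw [hassoc, T.tr_smul_one (mul_mem (T.hA1A2 hx.1) hmem) fun b hb =>
      ((T.mem_P_iff.mp hx).2 b hb).mul_right (T.commute_e2_mul_e1_mul hw hb),
    T.E2.map_mul_left hx.1 hmem]

lemma pairNV_eq_zero_iff [Nontrivial C] {x w : C} :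
    T.pairNV x w = 0 ↔ T.tr (x * T.e2 * T.e1 * w) = 0 := by
  rw [pairNV, mul_eq_zero, or_iff_right (mul_ne_zero (Complex.ofReal_ne_zero.mpr T.d_pos.ne')
    (pow_ne_zero _ (inv_ne_zero T.tau_ne_zero)))]

lemma eq_zero_of_e1_mul_eq_zero {w : C} (hw : ∀ a ∈ T.A, Commute a w) (h : T.e1 * w = 0) :
    w = 0 := by
  rw [← one_mul w, ← T.sum_lam_mul_e1_mul_star_lam, Finset.sum_mul]
  refine Finset.sum_eq_zero fun i _ => ?_
  rw [mul_assoc, (hw _ (star_mem (T.lam_qb.mem i))).eq, mul_assoc, ← mul_assoc T.e1, h,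
    zero_mul, mul_zero]

lemma pairNV_separatingRight {w : C} (hw : w ∈ T.Q) (h : ∀ x ∈ T.P, T.pairNV x w = 0) :
    w = 0 := by
  nontriviality C
  set m := T.E2.map (T.e2 * T.e1 * w) with hm_def
  have hmP : m ∈ T.P := T.E2_e2_mul_e1_mul_mem_P hw
  have hm : m = 0 := T.eq_zero_of_E0_E1_star_mul_self_eq_zero hmP.1 <| by
    rw [← T.tr_mul_e2_mul_e1_mul_smul_one (T.star_mem_P hmP) hw,
      T.pairNV_eq_zero_iff.mp (h _ (T.star_mem_P hmP)), zero_smul]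
  have he2 : T.e2 * (T.e1 * w) = 0 := by
    rw [T.e2_mul_eq_smul_e2_mul_E2 (mul_mem (T.hA1A2 T.e1_mem) hw.1), ← mul_assoc, ← hm_def, hm,
      mul_zero, smul_zero]
  refine T.eq_zero_of_e1_mul_eq_zero (T.mem_Q_iff.mp hw).2 ?_
  rw [← inv_smul_smul₀ T.tau_ne_zero (T.e1 * w), ← smul_mul_assoc, ← T.e1_mul_e2_mul_e1,
    mul_assoc, mul_assoc, he2, mul_zero, smul_zero]

lemma sum_lam_mul_mul_star_lam_mem_Q {y : C} (hyA2 : y ∈ T.A2) (hy : ∀ b ∈ T.B, Commute b y) :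
    ∑ i, T.lam i * y * star (T.lam i) ∈ T.Q :=
  T.mem_Q_iff.mpr ⟨sum_mem fun i _ => mul_mem (mul_mem (T.hA1A2 (T.lam_mem_A1 i)) hyA2)
    (T.hA1A2 (star_mem (T.lam_mem_A1 i))), fun _ ha => T.lam_qb.commute_sum_mul_mul_star hy ha⟩

lemma E2_e2_mul_e1_mul_sum_lam {y : C} (hy : y ∈ T.P) :
    T.E2.map (T.e2 * T.e1 * ∑ i, T.lam i * (T.e1 * T.e2 * y) * star (T.lam i))
      = (T.τ : ℂ) ^ 2 • y := by
  have hterm : ∀ i, T.E2.map (T.e2 * T.e1 * (T.lam i * (T.e1 * T.e2 * y) * star (T.lam i)))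
      = (T.τ : ℂ) ^ 2 • (y * (T.E0.map (T.lam i) * star (T.lam i))) := fun i => by
    have hb : T.E0.map (T.lam i) ∈ T.B := T.E0.mem_of_mem _ (T.lam_qb.mem i)
    have hyl : y * star (T.lam i) ∈ T.A1 := mul_mem hy.1 (star_mem (T.lam_mem_A1 i))
    calc _ = T.E2.map (T.e2 * (T.e1 * (T.lam i * (T.e1 * (T.e2 * (y * star (T.lam i))))))) := by
          simp only [mul_assoc]
      _ = T.E2.map (T.E0.map (T.lam i) * (T.e2 * T.e1 * T.e2) * (y * star (T.lam i))) := by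
          rw [T.e1_mul_mul_e1 (T.lam_qb.mem i), ← mul_assoc T.e2,
            ← (T.commute_e2 (T.hBA hb)).eq]
          simp only [mul_assoc]
      _ = _ := by
          rw [T.e2_mul_e1_mul_e2, mul_smul_comm, smul_mul_assoc, map_smul,
            T.E2_mul_e2_mul (T.hAA1 (T.hBA hb)) hyl, smul_smul, ← sq, ← mul_assoc,
            ((T.mem_P_iff.mp hy).2 _ hb).eq, mul_assoc]
  rw [Finset.mul_sum, map_sum, Finset.sum_congr rfl fun i _ => hterm i, ← Finset.smul_sum,
    ← Finset.mul_sum]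
  simpa using congrArg (fun s => (T.τ : ℂ) ^ 2 • (y * s)) (T.lam_qb.right 1 (one_mem _))

lemma pairNV_separatingLeft {x : C} (hx : x ∈ T.P) (h : ∀ w ∈ T.Q, T.pairNV x w = 0) :
    x = 0 := by
  nontriviality C
  have hx' := T.star_mem_P hx
  set w := ∑ i, T.lam i * (T.e1 * T.e2 * star x) * star (T.lam i)
  have hw : w ∈ T.Q := T.sum_lam_mul_mul_star_lam_mem_Q
    (mul_mem (mul_mem (T.hA1A2 T.e1_mem) T.e2_mem) (T.hA1A2 hx'.1)) fun b hb =>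
      ((T.commute_e1 hb).mul_right (T.commute_e2 (T.hBA hb))).mul_right
        ((T.mem_P_iff.mp hx').2 b hb)
  have htr := T.tr_mul_e2_mul_e1_mul_smul_one hx hw
  rw [T.pairNV_eq_zero_iff.mp (h w hw), zero_smul, T.E2_e2_mul_e1_mul_sum_lam hx', mul_smul_comm,
    map_smul, map_smul, eq_comm, smul_eq_zero, or_iff_right (pow_ne_zero _ T.tau_ne_zero)] at htr
  rw [← star_eq_zero]
  exact T.eq_zero_of_E0_E1_star_mul_self_eq_zero hx'.1 (by rwa [star_star])

end JonesTower

/-- Let `B ⊂ A` be an inclusion of simple unital C*-algebras with a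
conditional expectation of index-finite type.  Then the Nikshych–Vainerman form
`⟨x, w⟩ = d τ⁻² tr(x e₂ e₁ w)` is a non-degenerate duality between `P = B' ∩ A₁` and
`Q = A' ∩ A₂`: if `⟨x, w⟩ = 0` for all `x ∈ P` then `w = 0`, and if `⟨x, w⟩ = 0` for
all `w ∈ Q` then `x = 0`. -/
theorem statement_7 {C : Type*} [CStarAlgebra C] (T : JonesTower C) :
    (∀ w ∈ T.Q, (∀ x ∈ T.P, T.pairNV x w = 0) → w = 0)
    ∧ (∀ x ∈ T.P, (∀ w ∈ T.Q, T.pairNV x w = 0) → x = 0) :=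
  ⟨fun _ hw => T.pairNV_separatingRight hw, fun _ hx => T.pairNV_separatingLeft hx⟩
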